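/- Let f : ℝ → ℝ be continuous on the closed interval [a, b] with a < b, and fix p ≥ 1. For each integer N ≥ p + 1 let h_N = (b − a)/(N − 1), define the samples f_N(n) = f(a + n h_N) for n = 0, …, N−1, and define the mean-square prediction error of the order-p difference-operator LP as E_N = (1/N) Σ_{n=p}^{N−1} (Δ^p f_N(n))², where Δ^p f_N(n) = Σ_{i=0}^{p} (−1)^i C(p,i) f_N(n−i). Then E_N → 0 as N → ∞; in particular, for every ε > 0 there exists N₀ such that E_N < ε for all N ≥ N₀. Thus the LP of fixed order p constructed by the difference operator approximates the samples of f with any prescribed precision once the sampling frequency is sufficiently high. -/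

import Mathlib

/-!
Since `∑ᵢ (-1)ⁱ C(p,i) = 0` for `p ≥ 1`, the `p`-th difference can be rewritten as
`Δ^p g(n) = ∑ᵢ (-1)ⁱ C(p,i) (g(n-i) - g(n))`, hence
`|Δ^p g(n)| ≤ 2^p · max_{i ≤ p} |g(n-i) - g(n)|`. For the samples of `f` the points
`a + (n-i) h_N` and `a + n h_N` are at distance at most `p h_N → 0`, so uniform continuity of `f` on `[a, b]` makes every `Δ^p f_N(n)` uniformly small, and so is
the mean of their squares.
-/

open Filter Topology Finset

/-- The paper's `Δ^p g(n)`; for `n < i` the index `n - i` truncates to `0`. -/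
def backwardDiffPow (p : ℕ) (g : ℕ → ℝ) (n : ℕ) : ℝ :=
  ∑ i ∈ range (p + 1), (-1 : ℝ) ^ i * (p.choose i : ℝ) * g (n - i)

theorem abs_backwardDiffPow_le {p : ℕ} (hp : 0 < p) {g : ℕ → ℝ} {n : ℕ} {η : ℝ}
    (hg : ∀ i ≤ p, |g (n - i) - g n| ≤ η) : |backwardDiffPow p g n| ≤ 2 ^ p * η := by
  have hzero : ∑ i ∈ range (p + 1), (-1 : ℝ) ^ i * (p.choose i : ℝ) = 0 := by
    exact_mod_cast Int.alternating_sum_range_choose_of_ne hp.ne'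
  have hshift : backwardDiffPow p g n =
      ∑ i ∈ range (p + 1), (-1 : ℝ) ^ i * (p.choose i : ℝ) * (g (n - i) - g n) := by
    simp only [backwardDiffPow, mul_sub, sum_sub_distrib, ← sum_mul, hzero, zero_mul, sub_zero]
  calc |backwardDiffPow p g n| ≤ ∑ i ∈ range (p + 1), (p.choose i : ℝ) * η := by
        rw [hshift]
        refine (abs_sum_le_sum_abs _ _).trans (sum_le_sum fun i hi => ?_)
        rw [abs_mul, abs_mul, abs_pow, abs_neg, abs_one, one_pow, one_mul, Nat.abs_cast]
        exact mul_le_mul_of_nonneg_left (hg i (Nat.lt_succ_iff.1 (mem_range.1 hi)))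
          (Nat.cast_nonneg _)
    _ = 2 ^ p * η := by
        rw [← sum_mul, ← Nat.cast_sum, Nat.sum_range_choose, Nat.cast_pow, Nat.cast_ofNat]

theorem add_mul_div_mem_Icc {a b t s : ℝ} (hab : a ≤ b) (ht : 0 ≤ t) (hts : t ≤ s) :
    a + t * ((b - a) / s) ∈ Set.Icc a b := by
  have h₀ : 0 ≤ t / s := div_nonneg ht (ht.trans hts)
  have h₁ : t / s ≤ 1 := div_le_one_of_le₀ hts (ht.trans hts)
  rw [mul_div_left_comm, Set.mem_Icc]
  constructor <;> nlinarith

theorem one_div_mul_sum_sq_le {ι : Type*} {s : Finset ι} {x : ι → ℝ} {c : ℝ} {N : ℕ}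
    (hs : #s ≤ N) (hx : ∀ i ∈ s, |x i| ≤ c) : 1 / (N : ℝ) * ∑ i ∈ s, x i ^ 2 ≤ c ^ 2 := by
  have hterm : ∀ i ∈ s, x i ^ 2 ≤ c ^ 2 := fun i hi => by
    simpa only [sq_abs] using pow_le_pow_left₀ (abs_nonneg _) (hx i hi) 2
  have hsum : ∑ i ∈ s, x i ^ 2 ≤ N * c ^ 2 :=
    calc ∑ i ∈ s, x i ^ 2 ≤ #s * c ^ 2 := by
          simpa only [nsmul_eq_mul] using sum_le_card_nsmul s _ _ hterm
      _ ≤ N * c ^ 2 := by gcongr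
  rcases N.eq_zero_or_pos with rfl | hN
  · simpa using sq_nonneg c
  · rw [one_div_mul_eq_div, div_le_iff₀ (by positivity)]
    linarith

theorem tendsto_const_div_natCast_sub_one_nhds_zero (c : ℝ) :
    Tendsto (fun N : ℕ => c / ((N : ℝ) - 1)) atTop (𝓝 0) :=
  tendsto_const_nhds.div_atTop
    (tendsto_atTop_add_const_right _ (-1) tendsto_natCast_atTop_atTop)

section Samples

variable {f : ℝ → ℝ} {a b : ℝ}

theorem eventually_abs_sub_sample_le (hab : a ≤ b) (hf : ContinuousOn f (Set.Icc a b))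
    (p : ℕ) {η : ℝ} (hη : 0 < η) :
    ∀ᶠ N : ℕ in atTop, ∀ m n : ℕ, m ≤ n → n ≤ m + p → n < N →
      |f (a + m * ((b - a) / ((N : ℝ) - 1))) - f (a + n * ((b - a) / ((N : ℝ) - 1)))| ≤ η := by
  obtain ⟨δ, hδ, hfδ⟩ :=
    Metric.uniformContinuousOn_iff_le.1 (isCompact_Icc.uniformContinuousOn_of_continuous hf) η hη
  have hstep : ∀ᶠ N : ℕ in atTop, p * ((b - a) / ((N : ℝ) - 1)) ≤ δ := by
    have := (tendsto_const_div_natCast_sub_one_nhds_zero (b - a)).const_mul (p : ℝ)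
    rw [mul_zero] at this
    exact this.eventually (ge_mem_nhds hδ)
  filter_upwards [hstep, eventually_ge_atTop 1] with N hN hN₁ m n hmn hnm hn
  set h := (b - a) / ((N : ℝ) - 1)
  have hN₁' : (1 : ℝ) ≤ N := by exact_mod_cast hN₁
  have hh : 0 ≤ h := div_nonneg (by linarith) (by linarith)
  have hmnR : (m : ℝ) ≤ n := by exact_mod_cast hmn
  have hnmR : (n : ℝ) ≤ m + p := by exact_mod_cast hnm
  have hnN : (n : ℝ) ≤ N - 1 := by
    have : (n : ℝ) + 1 ≤ N := by exact_mod_cast hn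
    linarith
  have hdist : dist (a + m * h) (a + n * h) ≤ δ := by
    rw [Real.dist_eq, abs_sub_comm, show a + n * h - (a + m * h) = (n - m) * h by ring,
      abs_of_nonneg (mul_nonneg (by linarith) hh)]
    nlinarith
  rw [← Real.dist_eq]
  exact hfδ _ (add_mul_div_mem_Icc hab (Nat.cast_nonneg m) (by linarith)) _
    (add_mul_div_mem_Icc hab (Nat.cast_nonneg n) hnN) hdist

theorem eventually_abs_backwardDiffPow_sample_le (hab : a ≤ b)
    (hf : ContinuousOn f (Set.Icc a b)) {p : ℕ} (hp : 0 < p) {ε : ℝ} (hε : 0 < ε) :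
    ∀ᶠ N : ℕ in atTop, ∀ n < N,
      |backwardDiffPow p (fun m : ℕ => f (a + m * ((b - a) / ((N : ℝ) - 1)))) n| ≤ ε := by
  filter_upwards [eventually_abs_sub_sample_le hab hf p (div_pos hε (pow_pos two_pos p))]
    with N hN n hn
  refine (abs_backwardDiffPow_le hp fun i hi => hN (n - i) n (by omega) (by omega) hn).trans_eq ?_
  field_simp

end Samples

/-- Let `f` be continuous on `[a, b]`, fix the LP order `p ≥ 1`.
For `N ≥ p + 1`, sample `f` equidistantly: `f_N n = f (a + n h_N)` with `h_N = (b-a)/(N-1)`,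
and let `E N = (1/N) ∑_{n=p}^{N-1} (Δ^p f_N n)²`, where
`Δ^p f_N n = ∑_{i=0}^p (-1)^i C(p,i) f_N (n - i)` is the prediction error of the order-`p`
difference-operator LP. Then `E N → 0` as `N → ∞`; in particular, for every `ε > 0` there is
`N₀` with `E N < ε` for all `N ≥ N₀`. -/
theorem diff_operator_lp_error_tendsto_zero
    (f : ℝ → ℝ) (a b : ℝ) (hab : a < b)
    (hf : ContinuousOn f (Set.Icc a b)) (p : ℕ) (hp : 1 ≤ p)
    (E : ℕ → ℝ)
    (hE : ∀ N : ℕ, p + 1 ≤ N →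
      E N = (1 / (N : ℝ)) * ∑ n ∈ Finset.Icc p (N - 1),
        (∑ i ∈ Finset.range (p + 1), (-1 : ℝ) ^ i * (p.choose i : ℝ) *
          f (a + ((n - i : ℕ) : ℝ) * ((b - a) / ((N : ℝ) - 1)))) ^ 2) :
    Filter.Tendsto E Filter.atTop (nhds 0) ∧
    ∀ ε > (0 : ℝ), ∃ N₀ : ℕ, ∀ N ≥ N₀, E N < ε := by
  have hlim : Tendsto E atTop (𝓝 0) := by
    refine Metric.nhds_basis_closedBall.tendsto_right_iff.2 fun ε hε => ?_
    filter_upwards [eventually_ge_atTop (p + 1),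
      eventually_abs_backwardDiffPow_sample_le hab.le hf hp (Real.sqrt_pos.2 hε)] with N hN hΔ
    have hmean := one_div_mul_sum_sq_le (s := Finset.Icc p (N - 1)) (N := N)
      (by rw [Nat.card_Icc]; omega) fun n hn => hΔ n (by rw [Finset.mem_Icc] at hn; omega)
    rw [Metric.mem_closedBall, dist_zero_right, Real.norm_eq_abs, hE N hN,
      abs_of_nonneg (by positivity)]
    exact hmean.trans_eq (Real.sq_sqrt hε.le)
  exact ⟨hlim, fun ε hε => eventually_atTop.1 (hlim.eventually (gt_mem_nhds hε))⟩
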